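/- In the semi-discrete setting, let ψ⁰, ψ¹ ∈ S₊, t ∈ [0,1], and ψ^t = (1−t)ψ⁰ + tψ¹. Then ‖G(ψ^t) − G(ψ⁰)‖₁ ≤ 2(1 − (1−t)^d), where ‖v‖₁ = Σ_{i=1}^N |v_i|. -/

import Mathlib

open MeasureTheory
open scoped RealInnerProductSpace ENNReal Pointwise

/-- The Laguerre cell `V_i(ψ) = {x ∈ X : ∀ j, ψ_j ≥ ψ_i + ⟨y_j − y_i, x⟩}`. -/
def laguerreCell {d N : ℕ} (X : Set (EuclideanSpace ℝ (Fin d)))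
    (y : Fin N → EuclideanSpace ℝ (Fin d)) (ψ : Fin N → ℝ) (i : Fin N) :
    Set (EuclideanSpace ℝ (Fin d)) :=
  {x ∈ X | ∀ j, ψ i + ⟪y j - y i, x⟫ ≤ ψ j}

/-- `G_i(ψ) = ρ(V_i(ψ))`, the Lebesgue volume of the `i`-th Laguerre cell
(the cells are contained in `X`, on which `ρ` is the restricted Lebesgue measure). -/
noncomputable def Gmass {d N : ℕ} (X : Set (EuclideanSpace ℝ (Fin d)))
    (y : Fin N → EuclideanSpace ℝ (Fin d)) (ψ : Fin N → ℝ) (i : Fin N) : ℝ :=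
  (volume (laguerreCell X y ψ i)).toReal

theorem volume_hyperplane {d : ℕ} {v : EuclideanSpace ℝ (Fin d)} (hv : v ≠ 0) (c : ℝ) :
    volume {x : EuclideanSpace ℝ (Fin d) | ⟪v, x⟫ = c} = 0 := by
  set K : Submodule ℝ (EuclideanSpace ℝ (Fin d)) := LinearMap.ker ((innerSL ℝ v : EuclideanSpace ℝ (Fin d) →L[ℝ] ℝ) : EuclideanSpace ℝ (Fin d) →ₗ[ℝ] ℝ) with hKdef
  have hvv : ⟪v, v⟫ ≠ 0 := inner_self_ne_zero.mpr hv
  have hK : K ≠ ⊤ := by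
    intro h
    have hvK : v ∈ K := h ▸ Submodule.mem_top
    rw [hKdef, LinearMap.mem_ker] at hvK
    exact hvv hvK
  set x₀ : EuclideanSpace ℝ (Fin d) := (c / ⟪v, v⟫) • v with hx₀def
  have hx₀ : ⟪v, x₀⟫ = c := by
    rw [hx₀def, real_inner_smul_right, div_mul_cancel₀ _ hvv]
  have hset : {x : EuclideanSpace ℝ (Fin d) | ⟪v, x⟫ = c}
      = x₀ +ᵥ (K : Set (EuclideanSpace ℝ (Fin d))) := by
    ext x
    constructor
    · intro hx
      have hx' : ⟪v, x⟫ = c := hx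
      refine ⟨x - x₀, ?_, ?_⟩
      · rw [SetLike.mem_coe, hKdef, LinearMap.mem_ker]
        show ⟪v, x - x₀⟫ = 0
        rw [inner_sub_right, hx₀, hx', sub_self]
      · show x₀ + (x - x₀) = x
        abel
    · rintro ⟨k, hk, rfl⟩
      rw [SetLike.mem_coe, hKdef, LinearMap.mem_ker] at hk
      have hk0 : ⟪v, k⟫ = 0 := hk
      show ⟪v, x₀ + k⟫ = c
      rw [inner_add_right, hx₀, hk0, add_zero]
  rw [hset, measure_vadd]
  exact Measure.addHaar_submodule _ K hK

theorem laguerreCell_subset {d N : ℕ} (X : Set (EuclideanSpace ℝ (Fin d)))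
    (y : Fin N → EuclideanSpace ℝ (Fin d)) (ψ : Fin N → ℝ) (i : Fin N) :
    laguerreCell X y ψ i ⊆ X := fun _ hx => hx.1

theorem isClosed_laguerreCell {d N : ℕ} {X : Set (EuclideanSpace ℝ (Fin d))}
    (hX : IsClosed X) (y : Fin N → EuclideanSpace ℝ (Fin d)) (ψ : Fin N → ℝ) (i : Fin N) :
    IsClosed (laguerreCell X y ψ i) := by
  have : laguerreCell X y ψ i
      = X ∩ ⋂ j, {x : EuclideanSpace ℝ (Fin d) | ψ i + ⟪y j - y i, x⟫ ≤ ψ j} := by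
    ext x
    simp [laguerreCell, Set.mem_iInter]
  rw [this]
  refine hX.inter (isClosed_iInter fun j => ?_)
  exact isClosed_le (continuous_const.add (continuous_const.inner continuous_id))
    continuous_const

theorem sum_Gmass {d N : ℕ} (hN : 0 < N) {X : Set (EuclideanSpace ℝ (Fin d))}
    (hXc : IsCompact X) (hXvol : volume X = 1)
    {y : Fin N → EuclideanSpace ℝ (Fin d)} (hy : Function.Injective y) (ψ : Fin N → ℝ) :
    ∑ i, Gmass X y ψ i = 1 := by
  have : Nonempty (Fin N) := Fin.pos_iff_nonempty.mp hN
  have hcover : ⋃ i, laguerreCell X y ψ i = X := by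
    apply Set.Subset.antisymm
    · exact Set.iUnion_subset fun i => laguerreCell_subset X y ψ i
    · intro x hx
      obtain ⟨i, -, hi⟩ := Finset.exists_min_image Finset.univ
        (fun j => ψ j - ⟪y j, x⟫) Finset.univ_nonempty
      refine Set.mem_iUnion.mpr ⟨i, hx, fun j => ?_⟩
      have := hi j (Finset.mem_univ j)
      have hinner : ⟪y j - y i, x⟫ = ⟪y j, x⟫ - ⟪y i, x⟫ := inner_sub_left _ _ _
      linarith
  have hmeas : ∀ i, NullMeasurableSet (laguerreCell X y ψ i) volume := fun i =>
    ((isClosed_laguerreCell hXc.isClosed y ψ i).measurableSet).nullMeasurableSet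
  have hdisj : Pairwise (Function.onFun (AEDisjoint volume) (laguerreCell X y ψ)) := by
    intro i j hij
    have hv : y j - y i ≠ 0 := sub_ne_zero.mpr fun h => hij (hy h).symm
    refine measure_mono_null (fun x hx => ?_) (volume_hyperplane hv (ψ j - ψ i))
    obtain ⟨hxi, hxj⟩ := hx
    have h1 : ψ i + ⟪y j - y i, x⟫ ≤ ψ j := hxi.2 j
    have h2 : ψ j + ⟪y i - y j, x⟫ ≤ ψ i := hxj.2 i
    have hneg : ⟪y i - y j, x⟫ = -⟪y j - y i, x⟫ := by
      rw [← inner_neg_left, neg_sub]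
    show ⟪y j - y i, x⟫ = ψ j - ψ i
    rw [hneg] at h2
    linarith
  have hsum : ∑ i, volume (laguerreCell X y ψ i) = 1 := by
    rw [← tsum_fintype (L := SummationFilter.unconditional _), ← measure_iUnion₀ hdisj hmeas, hcover, hXvol]
  have hfin : ∀ i ∈ Finset.univ, volume (laguerreCell X y ψ i) ≠ ∞ := by
    intro i _
    exact ne_top_of_le_ne_top (hXvol ▸ ENNReal.one_ne_top)
      (measure_mono (laguerreCell_subset X y ψ i))
  calc ∑ i, Gmass X y ψ i = (∑ i, volume (laguerreCell X y ψ i)).toReal :=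
        (ENNReal.toReal_sum hfin).symm
    _ = 1 := by rw [hsum]; simp

theorem Gmass_lower {d N : ℕ} {X : Set (EuclideanSpace ℝ (Fin d))}
    (hXconv : Convex ℝ X) (hXfin : volume X ≠ ∞)
    (y : Fin N → EuclideanSpace ℝ (Fin d)) (ψ₀ ψ₁ : Fin N → ℝ) (i : Fin N)
    (hne : (laguerreCell X y ψ₁ i).Nonempty) {t : ℝ} (ht0 : 0 ≤ t) (ht1 : t ≤ 1) :
    (1 - t) ^ d * Gmass X y ψ₀ i ≤
      Gmass X y (fun j => (1 - t) * ψ₀ j + t * ψ₁ j) i := by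
  obtain ⟨x₁, hx₁⟩ := hne
  set f : EuclideanSpace ℝ (Fin d) → EuclideanSpace ℝ (Fin d) :=
    ⇑(AffineMap.homothety x₁ (1 - t)) with hfdef
  have hsub : f '' laguerreCell X y ψ₀ i
      ⊆ laguerreCell X y (fun j => (1 - t) * ψ₀ j + t * ψ₁ j) i := by
    rintro _ ⟨x, hx, rfl⟩
    have hfx : f x = (1 - t) • x + t • x₁ := by
      rw [hfdef, AffineMap.homothety_apply]
      show (1 - t) • (x - x₁) + x₁ = (1 - t) • x + t • x₁
      module
    constructor
    · rw [hfx]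
      exact hXconv hx.1 hx₁.1 (by linarith) ht0 (by ring)
    · intro j
      have h0 : ψ₀ i + ⟪y j - y i, x⟫ ≤ ψ₀ j := hx.2 j
      have h1 : ψ₁ i + ⟪y j - y i, x₁⟫ ≤ ψ₁ j := hx₁.2 j
      have hinner : ⟪y j - y i, f x⟫
          = (1 - t) * ⟪y j - y i, x⟫ + t * ⟪y j - y i, x₁⟫ := by
        rw [hfx, inner_add_right, real_inner_smul_right, real_inner_smul_right]
      show (1 - t) * ψ₀ i + t * ψ₁ i + ⟪y j - y i, f x⟫ ≤ (1 - t) * ψ₀ j + t * ψ₁ j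
      rw [hinner]
      nlinarith
  have hvol : volume (f '' laguerreCell X y ψ₀ i)
      = ENNReal.ofReal ((1 - t) ^ d) * volume (laguerreCell X y ψ₀ i) := by
    rw [hfdef]
    rw [Measure.addHaar_image_homothety]
    congr 2
    rw [finrank_euclideanSpace_fin, abs_of_nonneg (pow_nonneg (by linarith : (0:ℝ) ≤ 1 - t) d)]
  have hle : volume (f '' laguerreCell X y ψ₀ i)
      ≤ volume (laguerreCell X y (fun j => (1 - t) * ψ₀ j + t * ψ₁ j) i) :=
    measure_mono hsub
  rw [hvol] at hle
  have hfin' : volume (laguerreCell X y (fun j => (1 - t) * ψ₀ j + t * ψ₁ j) i) ≠ ∞ :=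
    ne_top_of_le_ne_top hXfin (measure_mono (laguerreCell_subset X y _ i))
  have := ENNReal.toReal_mono hfin' hle
  rw [ENNReal.toReal_mul, ENNReal.toReal_ofReal (pow_nonneg (by linarith : (0:ℝ) ≤ 1 - t) d)] at this
  exact this

/-- For `ψ⁰, ψ¹ ∈ S₊` and `ψ^t = (1−t)ψ⁰ + tψ¹` with `t ∈ [0,1]`, one has
`‖G(ψ^t) − G(ψ⁰)‖₁ ≤ 2(1 − (1−t)^d)`. -/
theorem Gmass_l1_bound
    (d N : ℕ) (X Y : Set (EuclideanSpace ℝ (Fin d)))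
    (hXc : IsCompact X) (hXconv : Convex ℝ X) (hXvol : volume X = 1)
    (hYc : IsCompact Y) (hYconv : Convex ℝ Y)
    (y : Fin N → EuclideanSpace ℝ (Fin d))
    (hy : Function.Injective y) (hyY : ∀ i, y i ∈ Y)
    (ψ₀ ψ₁ : Fin N → ℝ)
    (h₀ : ∀ i, 0 < Gmass X y ψ₀ i) (h₁ : ∀ i, 0 < Gmass X y ψ₁ i)
    (t : ℝ) (ht : t ∈ Set.Icc (0 : ℝ) 1) :
    ∑ i, |Gmass X y (fun j => (1 - t) * ψ₀ j + t * ψ₁ j) i - Gmass X y ψ₀ i| ≤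
      2 * (1 - (1 - t) ^ d) := by
  obtain ⟨ht0, ht1⟩ := ht
  set c : ℝ := (1 - t) ^ d with hcdef
  have hc1 : c ≤ 1 := pow_le_one₀ (by linarith) (by linarith)
  rcases Nat.eq_zero_or_pos N with hN | hN
  · subst hN
    simp only [Finset.univ_eq_empty, Finset.sum_empty]
    linarith
  set a : Fin N → ℝ := Gmass X y (fun j => (1 - t) * ψ₀ j + t * ψ₁ j) with hadef
  set b : Fin N → ℝ := Gmass X y ψ₀ with hbdef
  have hb : ∀ i, 0 ≤ b i := fun i => (h₀ i).le
  have hXfin : volume X ≠ ∞ := hXvol ▸ ENNReal.one_ne_top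
  have hca : ∀ i, c * b i ≤ a i := by
    intro i
    have hne : (laguerreCell X y ψ₁ i).Nonempty := by
      rcases Set.eq_empty_or_nonempty (laguerreCell X y ψ₁ i) with h | h
      · exfalso
        have := h₁ i
        rw [Gmass, h] at this
        simp at this
      · exact h
    exact Gmass_lower hXconv hXfin y ψ₀ ψ₁ i hne ht0 ht1
  have hsa : ∑ i, a i = 1 := sum_Gmass hN hXc hXvol hy _
  have hsb : ∑ i, b i = 1 := sum_Gmass hN hXc hXvol hy _
  have habs : ∀ i, |a i - b i| = (a i - b i) + 2 * max (b i - a i) 0 := by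
    intro i
    rcases le_total (a i) (b i) with h | h
    · rw [abs_of_nonpos (by linarith), max_eq_left (by linarith)]
      ring
    · rw [abs_of_nonneg (by linarith), max_eq_right (by linarith)]
      ring
  calc ∑ i, |a i - b i| = ∑ i, ((a i - b i) + 2 * max (b i - a i) 0) :=
        Finset.sum_congr rfl fun i _ => habs i
    _ = (∑ i, a i - ∑ i, b i) + 2 * ∑ i, max (b i - a i) 0 := by
        rw [Finset.sum_add_distrib, Finset.sum_sub_distrib, Finset.mul_sum]
    _ = 2 * ∑ i, max (b i - a i) 0 := by rw [hsa, hsb]; ring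
    _ ≤ 2 * ∑ i, (1 - c) * b i := by
        have hle : ∑ i, max (b i - a i) 0 ≤ ∑ i, (1 - c) * b i :=
          Finset.sum_le_sum fun i _ =>
            max_le (by linarith [hca i]) (mul_nonneg (by linarith) (hb i))
        linarith
    _ = 2 * (1 - c) := by rw [← Finset.mul_sum, hsb, mul_one]
    _ = 2 * (1 - (1 - t) ^ d) := by rw [hcdef]
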